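/- arXiv:2302.12215 — 2 statements merged into one kernel-verified Lean document; each statement's English description precedes it below -/
import Mathlib

section
/- Assuming the Continuum Hypothesis, there exists a coloring f : ℝ² → ℕ such that no three points forming a right triangle (three non-collinear points x, y, z with the angle at y equal to π/2) all receive the same color. -/
open EuclideanGeometry Metric Real Set

noncomputable section

abbrev Pt := EuclideanSpace ℝ (Fin 2)

/-- A line in the plane: a one-dimensional affine subspace, given parametrically. -/
def IsLine (L : Set Pt) : Prop :=
  ∃ p v : Pt, v ≠ 0 ∧ L = {x | ∃ t : ℝ, x = p + t • v}

/-- A circle in the plane: a metric sphere of positive radius. -/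
def IsCircle (C : Set Pt) : Prop :=
  ∃ (o : Pt) (r : ℝ), 0 < r ∧ C = sphere o r

/-- The line through two points. -/
def lineThru (x y : Pt) : Set Pt := {p | ∃ t : ℝ, p = x + t • (y - x)}

/-- Perpendicular lines: parametrizations with orthogonal direction vectors. -/
def PerpLines (L L' : Set Pt) : Prop :=
  ∃ p v q w : Pt, v ≠ 0 ∧ w ≠ 0 ∧ inner ℝ v w = (0 : ℝ) ∧
    L = {x | ∃ t : ℝ, x = p + t • v} ∧ L' = {x | ∃ t : ℝ, x = q + t • w}

/-- The Continuum Hypothesis. -/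
def CH : Prop := Cardinal.continuum.{0} = Cardinal.aleph.{0} 1

/-!
Under CH, `ℝ` is the union of an increasing chain `(F i)`, indexed by `ω₁`, of countable
subfields closed under square roots. A point gets the rank `i` at which both its coordinates
appear, and a line or circle is defined at stage `j` when its equation has coefficients in `F j`.
Two distinct curves defined at stage `j` meet only in points of rank `≤ j`, so a point `p` lies on
at most one curve defined before its rank, its special curve.

A point is coloured by a pair: an index into `ℕ` that is injective on each rank, and a second
colour chosen greedily along the ranks so as to differ from finitely many lower-rank points:
the points of the same index on the special curve of `p` at whose rank that curve was not yet
defined (at most three, since three points determine the curve), and the antipode of `p` when its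
special curve is a circle. In a monochromatic right triangle `xyz` with right angle at `y`, the
three ranks are distinct, and the point of highest rank lies on a curve defined by the two others:
the circle with diameter `xz` if it is `y`, the perpendicular to `yz` through `y` if it is `x`.
Either way one of the two lower points is a conflict of a point of the same colour.
-/

theorem Set.InjOn.finite_of_card_below_le {α β : Type*} [LinearOrder β] {s : Set α} {f : α → β}
    (hf : s.InjOn f) (n : ℕ)
    (h : ∀ d ∈ s, ∀ t : Finset α, ↑t ⊆ s → (∀ e ∈ t, f e < f d) → t.card ≤ n) : s.Finite := by
  classical
  by_contra hs
  obtain ⟨t, hts, htcard⟩ := Set.Infinite.exists_subset_card_eq hs (n + 2)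
  obtain ⟨m, hm, hmax⟩ := t.exists_max_image f (by rw [← Finset.card_pos, htcard]; omega)
  have hbelow : ∀ e ∈ t.erase m, f e < f m := fun e he =>
    (hmax e (Finset.mem_of_mem_erase he)).lt_of_ne fun hfe =>
      Finset.ne_of_mem_erase he (hf (hts (Finset.mem_of_mem_erase he)) (hts hm) hfe)
  have := h m (hts hm) (t.erase m) ((Finset.coe_subset.mpr (t.erase_subset m)).trans hts) hbelow
  rw [Finset.card_erase_of_mem hm, htcard] at this
  omega

theorem exists_nat_coloring_of_wellFounded {α β : Type*} [Preorder β] [WellFoundedLT β]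
    (rank : α → β) (B : α → Set α) (hfin : ∀ p, (B p).Finite)
    (hlt : ∀ p, ∀ d ∈ B p, rank d < rank p) : ∃ c : α → ℕ, ∀ p, ∀ d ∈ B p, c d ≠ c p := by
  let c : α → ℕ := (InvImage.wf rank wellFounded_lt).fix
    fun p ih => sInf {m | ∀ d (hd : d ∈ B p), ih d (hlt p d hd) ≠ m}
  have hc (p : α) : c p = sInf {m | ∀ d ∈ B p, c d ≠ m} := WellFounded.fix_eq _ _ _
  refine ⟨c, fun p d hd hcd => ?_⟩
  obtain ⟨m, hm⟩ := ((hfin p).image c).exists_notMem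
  have hne : {m | ∀ d ∈ B p, c d ≠ m}.Nonempty := ⟨m, fun d hd h => hm ⟨d, hd, h⟩⟩
  exact Nat.sInf_mem hne d hd (hcd.trans (hc p))

def SqrtClosed (K : Subfield ℝ) : Prop := ∀ x ∈ K, √x ∈ K

def IsPtOver (K : Subfield ℝ) (p : Pt) : Prop := p 0 ∈ K ∧ p 1 ∈ K

def lineSet (a b c : ℝ) : Set Pt := {w | a * w 0 + b * w 1 = c}

def circleSet (u v s : ℝ) : Set Pt := {w | (w 0 - u) ^ 2 + (w 1 - v) ^ 2 = s}

@[simp] theorem mem_lineSet {a b c : ℝ} {w : Pt} : w ∈ lineSet a b c ↔ a * w 0 + b * w 1 = c :=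
  Iff.rfl

@[simp] theorem mem_circleSet {u v s : ℝ} {w : Pt} :
    w ∈ circleSet u v s ↔ (w 0 - u) ^ 2 + (w 1 - v) ^ 2 = s :=
  Iff.rfl

def IsCurveOver (K : Subfield ℝ) (C : Set Pt) : Prop :=
  (∃ a ∈ K, ∃ b ∈ K, ∃ c ∈ K, (a ≠ 0 ∨ b ≠ 0) ∧ C = lineSet a b c) ∨
    (∃ u ∈ K, ∃ v ∈ K, ∃ s ∈ K, 0 < s ∧ C = circleSet u v s)

def mkPt (x y : ℝ) : Pt := !₂[x, y]

@[simp] theorem mkPt_zero (x y : ℝ) : mkPt x y 0 = x := rfl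

@[simp] theorem mkPt_one (x y : ℝ) : mkPt x y 1 = y := rfl

theorem Pt.ext_coords {p q : Pt} (h0 : p 0 = q 0) (h1 : p 1 = q 1) : p = q := by
  ext i; fin_cases i <;> assumption

theorem Pt.sq_add_sq_pos_of_ne {p q : Pt} (h : p ≠ q) :
    0 < (q 0 - p 0) ^ 2 + (q 1 - p 1) ^ 2 := by
  by_contra! h'
  exact h (Pt.ext_coords (by nlinarith) (by nlinarith))

theorem Pt.inner_eq (p q : Pt) : inner ℝ p q = p 0 * q 0 + p 1 * q 1 := by
  simp [PiLp.inner_apply, Fin.sum_univ_two, mul_comm]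

theorem IsPtOver.mono {K L : Subfield ℝ} (hKL : K ≤ L) {p : Pt} (hp : IsPtOver K p) :
    IsPtOver L p :=
  ⟨hKL hp.1, hKL hp.2⟩

theorem IsCurveOver.mono {K L : Subfield ℝ} (hKL : K ≤ L) {C : Set Pt} (hC : IsCurveOver K C) :
    IsCurveOver L C := by
  rcases hC with ⟨a, ha, b, hb, c, hc, hab, rfl⟩ | ⟨u, hu, v, hv, s, hs, hs0, rfl⟩
  exacts [Or.inl ⟨a, hKL ha, b, hKL hb, c, hKL hc, hab, rfl⟩,
    Or.inr ⟨u, hKL hu, v, hKL hv, s, hKL hs, hs0, rfl⟩]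

theorem mkPt_add_mem_circleSet {u v s d₀ d₁ : ℝ} (h : d₀ ^ 2 + d₁ ^ 2 = s) :
    mkPt (u + d₀) (v + d₁) ∈ circleSet u v s := by
  simpa using h

theorem lineSet_ne_circleSet {a b c u v s : ℝ} (hab : a ≠ 0 ∨ b ≠ 0) (hs : 0 < s) :
    lineSet a b c ≠ circleSet u v s := by
  intro h
  have hr : √s ^ 2 = s := Real.sq_sqrt hs.le
  have hr0 : √s ≠ 0 := (Real.sqrt_pos.mpr hs).ne'
  have on_line (d₀ d₁ : ℝ) (hd : d₀ ^ 2 + d₁ ^ 2 = s) : a * (u + d₀) + b * (v + d₁) = c := by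
    have hm : mkPt (u + d₀) (v + d₁) ∈ lineSet a b c := h ▸ mkPt_add_mem_circleSet hd
    simpa using hm
  have h₁ := on_line (√s) 0 (by simpa using hr)
  have h₂ := on_line (-√s) 0 (by simpa using hr)
  have h₃ := on_line 0 (√s) (by simpa using hr)
  have h₄ := on_line 0 (-√s) (by simpa using hr)
  rcases hab with ha | hb
  · exact ha (by simpa [hr0] using (by linear_combination (h₁ - h₂) / 2 : a * √s = 0))
  · exact hb (by simpa [hr0] using (by linear_combination (h₃ - h₄) / 2 : b * √s = 0))

theorem center_eq_of_circleSet_eq {u v s u' v' s' : ℝ} (hs : 0 < s)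
    (h : circleSet u v s = circleSet u' v' s') : u = u' ∧ v = v' := by
  have hr : √s ^ 2 = s := Real.sq_sqrt hs.le
  have hr0 : √s ≠ 0 := (Real.sqrt_pos.mpr hs).ne'
  have on_circle (d₀ d₁ : ℝ) (hd : d₀ ^ 2 + d₁ ^ 2 = s) :
      (u + d₀ - u') ^ 2 + (v + d₁ - v') ^ 2 = s' := by
    have hm : mkPt (u + d₀) (v + d₁) ∈ circleSet u' v' s' := h ▸ mkPt_add_mem_circleSet hd
    simpa using hm
  have h₁ := on_circle (√s) 0 (by simpa using hr)
  have h₂ := on_circle (-√s) 0 (by simpa using hr)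
  have h₃ := on_circle 0 (√s) (by simpa using hr)
  have h₄ := on_circle 0 (-√s) (by simpa using hr)
  constructor
  · have : √s * (u - u') = 0 := by linear_combination (h₁ - h₂) / 4
    linarith [(mul_eq_zero.mp this).resolve_left hr0]
  · have : √s * (v - v') = 0 := by linear_combination (h₃ - h₄) / 4
    linarith [(mul_eq_zero.mp this).resolve_left hr0]

theorem cross_eq_zero_of_lineSet_eq {a b c a' b' c' : ℝ} {p : Pt} (hp : p ∈ lineSet a b c)
    (h : lineSet a b c = lineSet a' b' c') : a * b' - a' * b = 0 := by
  have hq : mkPt (p 0 - b) (p 1 + a) ∈ lineSet a b c := by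
    simp only [mem_lineSet, mkPt_zero, mkPt_one] at hp ⊢; linear_combination hp
  rw [h, mem_lineSet] at hp hq
  simp only [mkPt_zero, mkPt_one] at hq
  linear_combination hq - hp

theorem dot_eq_zero_of_cross_eq_zero {a b a' b' X Y : ℝ} (hab : a ≠ 0 ∨ b ≠ 0)
    (hcross : a * b' - a' * b = 0) (h : a * X + b * Y = 0) : a' * X + b' * Y = 0 := by
  rcases hab with ha | hb
  · exact (mul_eq_zero.mp (by linear_combination a' * h + Y * hcross :
      a * (a' * X + b' * Y) = 0)).resolve_left ha
  · exact (mul_eq_zero.mp (by linear_combination b' * h - X * hcross :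
      b * (a' * X + b' * Y) = 0)).resolve_left hb

theorem lineSet_eq_of_cross_eq_zero {a b c a' b' c' : ℝ} (hab : a ≠ 0 ∨ b ≠ 0)
    (hab' : a' ≠ 0 ∨ b' ≠ 0) (hcross : a * b' - a' * b = 0) {p : Pt}
    (hp : p ∈ lineSet a b c) (hp' : p ∈ lineSet a' b' c') : lineSet a b c = lineSet a' b' c' := by
  rw [mem_lineSet] at hp hp'
  ext w
  rw [mem_lineSet, mem_lineSet]
  constructor
  · intro hw
    linear_combination hp' + dot_eq_zero_of_cross_eq_zero (X := w 0 - p 0) (Y := w 1 - p 1)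
      hab hcross (by linear_combination hw - hp)
  · intro hw
    linear_combination hp + dot_eq_zero_of_cross_eq_zero (X := w 0 - p 0) (Y := w 1 - p 1)
      hab' (a' := a) (b' := b) (by linear_combination -hcross) (by linear_combination hw - hp')

theorem cross_ne_zero_of_mem_circleSet {u v s : ℝ} {p q r : Pt} (hpq : p ≠ q) (hpr : p ≠ r)
    (hqr : q ≠ r) (hp : p ∈ circleSet u v s) (hq : q ∈ circleSet u v s)
    (hr : r ∈ circleSet u v s) :
    (q 0 - p 0) * (r 1 - p 1) - (r 0 - p 0) * (q 1 - p 1) ≠ 0 := by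
  rw [mem_circleSet] at hp hq hr
  intro hcross
  set n₂ := (q 0 - p 0) ^ 2 + (q 1 - p 1) ^ 2
  set n₃ := (r 0 - p 0) ^ 2 + (r 1 - p 1) ^ 2
  have hn₂ : n₂ ≠ 0 := (Pt.sq_add_sq_pos_of_ne hpq).ne'
  have hn₃ : n₃ ≠ 0 := (Pt.sq_add_sq_pos_of_ne hpr).ne'
  have hx : (r 0 - p 0) * n₂ = (q 0 - p 0) * n₃ := by
    linear_combination (r 0 - p 0) * (hq - hp) - (q 0 - p 0) * (hr - hp) + 2 * (p 1 - v) * hcross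
  have hy : (r 1 - p 1) * n₂ = (q 1 - p 1) * n₃ := by
    linear_combination (r 1 - p 1) * (hq - hp) - (q 1 - p 1) * (hr - hp) - 2 * (p 0 - u) * hcross
  -- `n₂ • (r - p) = n₃ • (q - p)`; comparing squared lengths gives `n₂ = n₃`
  have hn : n₂ = n₃ := by
    have : n₂ * n₃ * (n₂ - n₃) = 0 := by
      linear_combination ((r 0 - p 0) * n₂ + (q 0 - p 0) * n₃) * hx
        + ((r 1 - p 1) * n₂ + (q 1 - p 1) * n₃) * hy
    simpa [hn₂, hn₃, sub_eq_zero] using this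
  rw [← hn] at hx hy
  exact hqr (Pt.ext_coords
    (by nlinarith [mul_right_cancel₀ hn₂ hx])
    (by nlinarith [mul_right_cancel₀ hn₂ hy]))

section FieldArithmetic

variable {K : Subfield ℝ}

theorem mem_of_linear_system {a b c a' b' c' x y : ℝ} (hcross : a * b' - a' * b ≠ 0)
    (ha : a ∈ K) (hb : b ∈ K) (hc : c ∈ K) (ha' : a' ∈ K) (hb' : b' ∈ K) (hc' : c' ∈ K)
    (h : a * x + b * y = c) (h' : a' * x + b' * y = c') : x ∈ K ∧ y ∈ K := by
  have hx : x * (a * b' - a' * b) = c * b' - c' * b := by linear_combination b' * h - b * h'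
  have hy : y * (a * b' - a' * b) = a * c' - a' * c := by linear_combination a * h' - a' * h
  rw [← eq_div_iff hcross] at hx hy
  have hdet : a * b' - a' * b ∈ K := sub_mem (mul_mem ha hb') (mul_mem ha' hb)
  exact ⟨hx ▸ div_mem (sub_mem (mul_mem hc hb') (mul_mem hc' hb)) hdet,
    hy ▸ div_mem (sub_mem (mul_mem ha hc') (mul_mem ha' hc)) hdet⟩

theorem mem_of_quadratic (hK : SqrtClosed K) {A B C x : ℝ} (hA : A ≠ 0)
    (hAK : A ∈ K) (hBK : B ∈ K) (hCK : C ∈ K) (hx : A * x ^ 2 + B * x + C = 0) : x ∈ K := by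
  -- `2 A x + B` is a square root of the discriminant, so up to sign it lies in `K`.
  have hdisc : |2 * A * x + B| = √(B ^ 2 - 4 * A * C) := by
    rw [← Real.sqrt_sq_eq_abs]; congr 1; linear_combination 4 * A * hx
  have habs : |2 * A * x + B| ∈ K := hdisc ▸ hK _ (by aesop)
  have hD : 2 * A * x + B ∈ K := by
    rcases abs_choice (2 * A * x + B) with h | h
    · exact h ▸ habs
    · simpa [h] using neg_mem habs
  have hx' : x = (2 * A * x + B - B) / (2 * A) := by field_simp; ring
  exact hx' ▸ div_mem (sub_mem hD hBK) (mul_mem (ofNat_mem K 2) hAK)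

theorem IsPtOver.of_mem_lineSet_of_mem_circleSet (hK : SqrtClosed K) {a b c u v s : ℝ}
    (hab : a ≠ 0 ∨ b ≠ 0) (ha : a ∈ K) (hb : b ∈ K) (hc : c ∈ K) (hu : u ∈ K) (hv : v ∈ K)
    (hs : s ∈ K) {p : Pt} (hpl : p ∈ lineSet a b c) (hpc : p ∈ circleSet u v s) :
    IsPtOver K p := by
  rw [mem_lineSet] at hpl
  rw [mem_circleSet] at hpc
  have hn : a ^ 2 + b ^ 2 ≠ 0 := by rcases hab with h | h <;> positivity
  -- the position `b p₀ - a p₁` of `p` along the line solves a quadratic over `K`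
  have ht : b * p 0 - a * p 1 ∈ K := by
    refine mem_of_quadratic hK hn (by aesop)
      (B := 2 * (b * (a * c - (a ^ 2 + b ^ 2) * u) - a * (b * c - (a ^ 2 + b ^ 2) * v)))
      (C := (a * c - (a ^ 2 + b ^ 2) * u) ^ 2 + (b * c - (a ^ 2 + b ^ 2) * v) ^ 2
        - s * (a ^ 2 + b ^ 2) ^ 2) (by aesop) (by aesop) ?_
    subst hpl
    linear_combination (a ^ 2 + b ^ 2) ^ 2 * hpc
  have h0 : p 0 = (a * c + b * (b * p 0 - a * p 1)) / (a ^ 2 + b ^ 2) := by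
    rw [eq_div_iff hn, ← hpl]; ring
  have h1 : p 1 = (b * c - a * (b * p 0 - a * p 1)) / (a ^ 2 + b ^ 2) := by
    rw [eq_div_iff hn, ← hpl]; ring
  have hnK : a ^ 2 + b ^ 2 ∈ K := add_mem (pow_mem ha 2) (pow_mem hb 2)
  exact ⟨h0 ▸ div_mem (add_mem (mul_mem ha hc) (mul_mem hb ht)) hnK,
    h1 ▸ div_mem (sub_mem (mul_mem hb hc) (mul_mem ha ht)) hnK⟩

theorem IsCurveOver.isPtOver_of_mem_of_mem (hK : SqrtClosed K) {C C' : Set Pt}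
    (hC : IsCurveOver K C) (hC' : IsCurveOver K C') (hne : C ≠ C') {p : Pt} (hp : p ∈ C)
    (hp' : p ∈ C') : IsPtOver K p := by
  rcases hC with ⟨a, ha, b, hb, c, hc, hab, rfl⟩ | ⟨u, hu, v, hv, s, hs, -, rfl⟩ <;>
    rcases hC' with ⟨a', ha', b', hb', c', hc', hab', rfl⟩ | ⟨u', hu', v', hv', s', hs', -, rfl⟩
  · by_cases hcross : a * b' - a' * b = 0
    · exact absurd (lineSet_eq_of_cross_eq_zero hab hab' hcross hp hp') hne
    · exact mem_of_linear_system hcross ha hb hc ha' hb' hc' hp hp'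
  · exact .of_mem_lineSet_of_mem_circleSet hK hab ha hb hc hu' hv' hs' hp hp'
  · exact .of_mem_lineSet_of_mem_circleSet hK hab' ha' hb' hc' hu hv hs hp' hp
  · rw [mem_circleSet] at hp hp'
    by_cases hcenter : u = u' ∧ v = v'
    · obtain ⟨rfl, rfl⟩ := hcenter
      exact absurd (by rw [← hp, ← hp']) hne
    -- `p` lies on the radical axis of the two circles
    have hab : 2 * (u' - u) ≠ 0 ∨ 2 * (v' - v) ≠ 0 := by
      contrapose! hcenter; constructor <;> linarith
    refine .of_mem_lineSet_of_mem_circleSet hK hab (by aesop) (by aesop)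
      (c := s - s' + u' ^ 2 + v' ^ 2 - u ^ 2 - v ^ 2) (by aesop) hu hv hs ?_ hp
    rw [mem_lineSet]; linear_combination hp - hp'

theorem IsCurveOver.of_three_mem {C : Set Pt} (hC : IsCurveOver ⊤ C) {p q r : Pt}
    (hpq : p ≠ q) (hpr : p ≠ r) (hqr : q ≠ r) (hp : p ∈ C) (hq : q ∈ C) (hr : r ∈ C)
    (hpK : IsPtOver K p) (hqK : IsPtOver K q) (hrK : IsPtOver K r) : IsCurveOver K C := by
  obtain ⟨hp₀, hp₁⟩ := hpK
  obtain ⟨hq₀, hq₁⟩ := hqK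
  obtain ⟨hr₀, hr₁⟩ := hrK
  rcases hC with ⟨a, -, b, -, c, -, hab, rfl⟩ | ⟨u, -, v, -, s, -, hs, rfl⟩
  · have hn : p 1 - q 1 ≠ 0 ∨ q 0 - p 0 ≠ 0 := by
      by_contra! h
      exact hpq (Pt.ext_coords (by linarith) (by linarith))
    rw [mem_lineSet] at hp hq
    rw [lineSet_eq_of_cross_eq_zero hab hn (by linear_combination hq - hp) (mem_lineSet.mpr hp)
      (mem_lineSet.mpr rfl)]
    exact .inl ⟨_, sub_mem hp₁ hq₁, _, sub_mem hq₀ hp₀, _, by aesop, hn, rfl⟩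
  · have hcross := cross_ne_zero_of_mem_circleSet hpq hpr hqr hp hq hr
    rw [mem_circleSet] at hp hq hr
    -- the center solves the linear system obtained by subtracting the circle equations
    obtain ⟨hu, hv⟩ := mem_of_linear_system (x := u) (y := v)
      (a := 2 * (q 0 - p 0)) (b := 2 * (q 1 - p 1)) (c := q 0 ^ 2 + q 1 ^ 2 - p 0 ^ 2 - p 1 ^ 2)
      (a' := 2 * (r 0 - p 0)) (b' := 2 * (r 1 - p 1)) (c' := r 0 ^ 2 + r 1 ^ 2 - p 0 ^ 2 - p 1 ^ 2)
      (by contrapose! hcross; linear_combination hcross / 4)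
      (by aesop) (by aesop) (by aesop) (by aesop) (by aesop) (by aesop)
      (by linear_combination hp - hq) (by linear_combination hp - hr)
    exact .inr ⟨u, hu, v, hv, s, hp ▸ by aesop, hs, rfl⟩

end FieldArithmetic

theorem countable_setOf_isPtOver {K : Subfield ℝ} (hK : (K : Set ℝ).Countable) :
    {p | IsPtOver K p}.Countable := by
  refine ((hK.prod hK).image fun x => mkPt x.1 x.2).mono fun p hp => ?_
  exact ⟨(p 0, p 1), ⟨hp.1, hp.2⟩, Pt.ext_coords rfl rfl⟩

section SqrtClosure

open Cardinal

def sqrtClosureSeq (s : Set ℝ) : ℕ → Subfield ℝ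
  | 0 => Subfield.closure s
  | n + 1 => Subfield.closure (sqrtClosureSeq s n ∪ Real.sqrt '' sqrtClosureSeq s n)

def sqrtClosure (s : Set ℝ) : Subfield ℝ := ⨆ n, sqrtClosureSeq s n

theorem monotone_sqrtClosureSeq (s : Set ℝ) : Monotone (sqrtClosureSeq s) :=
  monotone_nat_of_le_succ fun _ => subset_union_left.trans Subfield.subset_closure

theorem mem_sqrtClosure {s : Set ℝ} {x : ℝ} : x ∈ sqrtClosure s ↔ ∃ n, x ∈ sqrtClosureSeq s n :=
  Subfield.mem_iSup_of_directed (monotone_sqrtClosureSeq s).directed_le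

theorem subset_sqrtClosure (s : Set ℝ) : s ⊆ sqrtClosure s := fun _ hx =>
  mem_sqrtClosure.mpr ⟨0, Subfield.subset_closure hx⟩

theorem sqrtClosed_sqrtClosure (s : Set ℝ) : SqrtClosed (sqrtClosure s) := fun x hx =>
  let ⟨n, hn⟩ := mem_sqrtClosure.mp hx
  mem_sqrtClosure.mpr ⟨n + 1, Subfield.subset_closure (Or.inr ⟨x, hn, rfl⟩)⟩

theorem sqrtClosure_le {s : Set ℝ} {K : Subfield ℝ} (hK : SqrtClosed K) (hs : s ⊆ K) :
    sqrtClosure s ≤ K := by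
  refine iSup_le fun n => ?_
  induction n with
  | zero => exact Subfield.closure_le.mpr hs
  | succ n ih =>
    exact Subfield.closure_le.mpr (union_subset ih (image_subset_iff.mpr fun x hx => hK x (ih hx)))

theorem sqrtClosure_mono {s t : Set ℝ} (h : s ⊆ t) : sqrtClosure s ≤ sqrtClosure t :=
  sqrtClosure_le (sqrtClosed_sqrtClosure t) (h.trans (subset_sqrtClosure t))

theorem Subfield.countable_closure {α : Type*} [DivisionRing α] {s : Set α} (hs : s.Countable) :
    (Subfield.closure s : Set α).Countable := by
  rw [← le_aleph0_iff_set_countable] at hs ⊢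
  exact (Subfield.cardinalMk_closure_le_max s).trans (max_le hs le_rfl)

theorem countable_sqrtClosure {s : Set ℝ} (hs : s.Countable) :
    (sqrtClosure s : Set ℝ).Countable := by
  rw [sqrtClosure, Subfield.coe_iSup_of_directed (monotone_sqrtClosureSeq s).directed_le]
  refine countable_iUnion fun n => ?_
  induction n with
  | zero => exact Subfield.countable_closure hs
  | succ n ih => exact Subfield.countable_closure (ih.union (ih.image _))

end SqrtClosure

structure SqrtFieldChain (ι : Type*) [Preorder ι] where
  field : ι → Subfield ℝ
  monotone : Monotone field
  sqrtClosed (i : ι) : SqrtClosed (field i)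
  countable (i : ι) : (field i : Set ℝ).Countable
  exists_mem (x : ℝ) : ∃ i, x ∈ field i

def SqrtFieldChain.ofSurjective {ι : Type*} [Preorder ι] (r : ι → ℝ) (hr : r.Surjective)
    (hcount : ∀ i : ι, (Iic i).Countable) : SqrtFieldChain ι where
  field i := sqrtClosure (r '' Iic i)
  monotone _ _ h := sqrtClosure_mono (image_mono (Iic_subset_Iic.mpr h))
  sqrtClosed _ := sqrtClosed_sqrtClosure _
  countable i := countable_sqrtClosure ((hcount i).image r)
  exists_mem x := let ⟨i, hi⟩ := hr x; ⟨i, subset_sqrtClosure _ ⟨i, mem_Iic.mpr le_rfl, hi⟩⟩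

open Cardinal in
theorem nonempty_sqrtFieldChain_of_CH (hCH : CH) :
    Nonempty (SqrtFieldChain (ℵ₁ : Cardinal.{0}).ord.ToType) := by
  obtain ⟨e⟩ : Nonempty ((ℵ₁).ord.ToType ≃ ℝ) := by
    rw [← Cardinal.eq, mk_ord_toType, mk_real, hCH]
  refine ⟨.ofSurjective ⇑e e.surjective fun i => ?_⟩
  rw [← Iio_insert]
  exact (le_aleph0_iff_set_countable.mp (lt_aleph_one_iff.mp (by simpa using mk_Iio_lt i))).insert _

namespace SqrtFieldChain

variable {ι : Type*} [LinearOrder ι] (𝓕 : SqrtFieldChain ι)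

theorem exists_isPtOver (p : Pt) : ∃ i, IsPtOver (𝓕.field i) p := by
  obtain ⟨i, hi⟩ := 𝓕.exists_mem (p 0)
  obtain ⟨j, hj⟩ := 𝓕.exists_mem (p 1)
  exact ⟨max i j, 𝓕.monotone (le_max_left i j) hi, 𝓕.monotone (le_max_right i j) hj⟩

def IsCurveBelow (i : ι) (C : Set Pt) : Prop := ∃ j < i, IsCurveOver (𝓕.field j) C

def levelIndex (i : ι) : Pt → ℕ :=
  (countable_iff_exists_injOn.mp (countable_setOf_isPtOver (𝓕.countable i))).choose

theorem injOn_levelIndex (i : ι) : InjOn (𝓕.levelIndex i) {p | IsPtOver (𝓕.field i) p} :=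
  (countable_iff_exists_injOn.mp (countable_setOf_isPtOver (𝓕.countable i))).choose_spec

variable [WellFoundedLT ι]

def rank (p : Pt) : ι := wellFounded_lt.min {i | IsPtOver (𝓕.field i) p} (𝓕.exists_isPtOver p)

theorem isPtOver_of_rank_le {p : Pt} {i : ι} (h : 𝓕.rank p ≤ i) : IsPtOver (𝓕.field i) p :=
  IsPtOver.mono (𝓕.monotone h) (wellFounded_lt.min_mem _ (𝓕.exists_isPtOver p))

theorem rank_le {p : Pt} {i : ι} (h : IsPtOver (𝓕.field i) p) : 𝓕.rank p ≤ i :=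
  wellFounded_lt.min_le (s := {i | IsPtOver (𝓕.field i) p}) h

theorem eq_of_isCurveBelow_rank {p : Pt} {C C' : Set Pt} (hC : 𝓕.IsCurveBelow (𝓕.rank p) C)
    (hC' : 𝓕.IsCurveBelow (𝓕.rank p) C') (hp : p ∈ C) (hp' : p ∈ C') : C = C' := by
  obtain ⟨j, hj, hCj⟩ := hC
  obtain ⟨j', hj', hCj'⟩ := hC'
  by_contra hne
  have := (hCj.mono (𝓕.monotone (le_max_left j j'))).isPtOver_of_mem_of_mem (𝓕.sqrtClosed _)
    (hCj'.mono (𝓕.monotone (le_max_right j j'))) hne hp hp'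
  exact (𝓕.rank_le this).not_gt (max_lt hj hj')

open Classical in
/-- The line or circle through `p` defined at a stage before `p` appears, which is unique by
`eq_of_isCurveBelow_rank`; it is `∅` if there is none. -/
def specialCurve (p : Pt) : Set Pt :=
  if h : ∃ C, 𝓕.IsCurveBelow (𝓕.rank p) C ∧ p ∈ C then h.choose else ∅

theorem specialCurve_eq {p : Pt} {C : Set Pt} (hC : 𝓕.IsCurveBelow (𝓕.rank p) C) (hp : p ∈ C) :
    𝓕.specialCurve p = C := by
  have h : ∃ C, 𝓕.IsCurveBelow (𝓕.rank p) C ∧ p ∈ C := ⟨C, hC, hp⟩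
  rw [specialCurve, dif_pos h]
  exact 𝓕.eq_of_isCurveBelow_rank h.choose_spec.1 hC h.choose_spec.2 hp

theorem isCurveBelow_specialCurve {p d : Pt} (hd : d ∈ 𝓕.specialCurve p) :
    𝓕.IsCurveBelow (𝓕.rank p) (𝓕.specialCurve p) := by
  unfold specialCurve at hd ⊢
  split_ifs at hd ⊢ with h
  · exact h.choose_spec.1
  · exact absurd hd (notMem_empty d)

def index (p : Pt) : ℕ := 𝓕.levelIndex (𝓕.rank p) p

theorem eq_of_rank_eq_of_index_eq {p q : Pt} (hr : 𝓕.rank p = 𝓕.rank q)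
    (hi : 𝓕.index p = 𝓕.index q) : p = q := by
  unfold index at hi
  rw [hr] at hi
  exact 𝓕.injOn_levelIndex _ (𝓕.isPtOver_of_rank_le hr.le) (𝓕.isPtOver_of_rank_le le_rfl) hi

def curvePredecessors (p : Pt) : Set Pt :=
  {d | d ∈ 𝓕.specialCurve p ∧ 𝓕.index d = 𝓕.index p ∧ 𝓕.rank d < 𝓕.rank p ∧
    ¬ 𝓕.IsCurveBelow (𝓕.rank d) (𝓕.specialCurve p)}

def antipodes (p : Pt) : Set Pt :=
  {d | 𝓕.rank d < 𝓕.rank p ∧ ∃ u v s, 0 < s ∧ 𝓕.specialCurve p = circleSet u v s ∧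
    d = mkPt (2 * u - p 0) (2 * v - p 1)}

def conflicts (p : Pt) : Set Pt := 𝓕.curvePredecessors p ∪ 𝓕.antipodes p

theorem finite_curvePredecessors (p : Pt) : (𝓕.curvePredecessors p).Finite := by
  refine Set.InjOn.finite_of_card_below_le (f := 𝓕.rank)
    (fun d hd d' hd' h => 𝓕.eq_of_rank_eq_of_index_eq h (hd.2.1.trans hd'.2.1.symm)) 2 ?_
  intro d hd t ht hlt
  by_contra! h3
  obtain ⟨e₁, he₁, e₂, he₂, e₃, he₃, h₁₂, h₁₃, h₂₃⟩ := Finset.two_lt_card.mp h3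
  obtain ⟨j, -, hj⟩ := 𝓕.isCurveBelow_specialCurve hd.1
  -- three points of lower rank already determine the curve before `d` appears
  refine hd.2.2.2 ⟨max (max (𝓕.rank e₁) (𝓕.rank e₂)) (𝓕.rank e₃),
    max_lt (max_lt (hlt _ he₁) (hlt _ he₂)) (hlt _ he₃),
    (hj.mono le_top).of_three_mem h₁₂ h₁₃ h₂₃ (ht he₁).1 (ht he₂).1 (ht he₃).1
      (𝓕.isPtOver_of_rank_le ?_) (𝓕.isPtOver_of_rank_le ?_) (𝓕.isPtOver_of_rank_le ?_)⟩
  · exact (le_max_left _ _).trans (le_max_left _ _)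
  · exact (le_max_right _ _).trans (le_max_left _ _)
  · exact le_max_right _ _

theorem subsingleton_antipodes (p : Pt) : (𝓕.antipodes p).Subsingleton := by
  rintro d ⟨-, u, v, s, hs, hC, rfl⟩ d' ⟨-, u', v', s', -, hC', rfl⟩
  obtain ⟨rfl, rfl⟩ := center_eq_of_circleSet_eq hs (hC.symm.trans hC')
  rfl

theorem exists_coloring_avoiding_conflicts : ∃ c : Pt → ℕ, ∀ p, ∀ d ∈ 𝓕.conflicts p, c d ≠ c p :=
  exists_nat_coloring_of_wellFounded 𝓕.rank _
    (fun p => (𝓕.finite_curvePredecessors p).union (𝓕.subsingleton_antipodes p).finite)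
    fun _ _ hd => hd.elim (fun h => h.2.2.1) fun h => h.1

variable {c : Pt → ℕ}

theorem false_of_vertex_rank_max
    (hc : ∀ p, ∀ d ∈ 𝓕.conflicts p, c d ≠ c p) {x y z : Pt}
    (hxz : x ≠ z) (hright : (x 0 - y 0) * (z 0 - y 0) + (x 1 - y 1) * (z 1 - y 1) = 0)
    (hxz_rank : 𝓕.rank x < 𝓕.rank z) (hzy_rank : 𝓕.rank z < 𝓕.rank y)
    (hindex : 𝓕.index z = 𝓕.index y) (hcxz : c x = c z) (hczy : c z = c y) : False := by
  -- the circle with diameter `xz` passes through `y`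
  set C := circleSet ((x 0 + z 0) / 2) ((x 1 + z 1) / 2) (((z 0 - x 0) ^ 2 + (z 1 - x 1) ^ 2) / 4)
  have hyC : y ∈ C := by rw [mem_circleSet]; linear_combination hright
  have hzC : z ∈ C := by rw [mem_circleSet]; ring
  obtain ⟨hx₀, hx₁⟩ := 𝓕.isPtOver_of_rank_le hxz_rank.le
  obtain ⟨hz₀, hz₁⟩ := 𝓕.isPtOver_of_rank_le le_rfl (p := z)
  have hs : 0 < ((z 0 - x 0) ^ 2 + (z 1 - x 1) ^ 2) / 4 :=
    div_pos (Pt.sq_add_sq_pos_of_ne hxz) four_pos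
  have hCz : IsCurveOver (𝓕.field (𝓕.rank z)) C :=
    .inr ⟨_, by aesop, _, by aesop, _, by aesop, hs, rfl⟩
  have hCy : 𝓕.specialCurve y = C := 𝓕.specialCurve_eq ⟨_, hzy_rank, hCz⟩ hyC
  by_cases hbelow : 𝓕.IsCurveBelow (𝓕.rank z) C
  · refine hc z x (.inr ⟨hxz_rank, _, _, _, hs, 𝓕.specialCurve_eq hbelow hzC, ?_⟩) hcxz
    exact Pt.ext_coords (by simp; ring) (by simp; ring)
  · exact hc y z (.inl ⟨hCy ▸ hzC, hindex, hzy_rank, hCy ▸ hbelow⟩) hczy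

theorem false_of_leg_rank_max
    (hc : ∀ p, ∀ d ∈ 𝓕.conflicts p, c d ≠ c p) {x y z : Pt}
    (hyz : y ≠ z) (hright : (x 0 - y 0) * (z 0 - y 0) + (x 1 - y 1) * (z 1 - y 1) = 0)
    (hyx_rank : 𝓕.rank y < 𝓕.rank x) (hzx_rank : 𝓕.rank z < 𝓕.rank x)
    (hyz_rank : 𝓕.rank y ≠ 𝓕.rank z) (hindex_yx : 𝓕.index y = 𝓕.index x)
    (hindex_yz : 𝓕.index y = 𝓕.index z) (hcyx : c y = c x) (hcyz : c y = c z) : False := by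
  -- the line through `y` perpendicular to `yz` passes through `x`
  have hyz_sq := Pt.sq_add_sq_pos_of_ne hyz
  have hn : z 0 - y 0 ≠ 0 ∨ z 1 - y 1 ≠ 0 := by
    by_contra! h; simp [h.1, h.2] at hyz_sq
  set C := lineSet (z 0 - y 0) (z 1 - y 1) ((z 0 - y 0) * y 0 + (z 1 - y 1) * y 1)
  have hxC : x ∈ C := by rw [mem_lineSet]; linear_combination hright
  have hyC : y ∈ C := by rw [mem_lineSet]
  have hzC : z ∉ C := by rw [mem_lineSet]; intro h; nlinarith
  have hy := 𝓕.isPtOver_of_rank_le (le_max_left (𝓕.rank y) (𝓕.rank z))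
  have hz := 𝓕.isPtOver_of_rank_le (le_max_right (𝓕.rank y) (𝓕.rank z))
  have hCx : 𝓕.specialCurve x = C :=
    𝓕.specialCurve_eq ⟨_, max_lt hyx_rank hzx_rank, .inl ⟨_, sub_mem hz.1 hy.1, _,
      sub_mem hz.2 hy.2, _, add_mem (mul_mem (sub_mem hz.1 hy.1) hy.1)
        (mul_mem (sub_mem hz.2 hy.2) hy.2), hn, rfl⟩⟩ hxC
  by_cases hbelow : 𝓕.IsCurveBelow (𝓕.rank y) C
  swap
  · exact hc x y (.inl ⟨hCx ▸ hyC, hindex_yx, hyx_rank, hCx ▸ hbelow⟩) hcyx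
  obtain ⟨j, hj, hCj⟩ := hbelow
  obtain ⟨a, ha, b, hb, _, -, hab, hCeq⟩ | ⟨_, -, _, -, _, -, hs, hCeq⟩ := id hCj
  swap
  · exact lineSet_ne_circleSet hn hs hCeq
  -- the line `yz`, with direction `(a, b)` read off the representation of `C` at stage `j`
  have hcross := cross_eq_zero_of_lineSet_eq hyC hCeq
  set M := lineSet (-b) a (-b * y 0 + a * y 1)
  have hyM : y ∈ M := by rw [mem_lineSet]
  have hzM : z ∈ M := by rw [mem_lineSet]; linear_combination -hcross
  have hMC : M ≠ C := fun h => hzC (h ▸ hzM)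
  have hn' : -b ≠ 0 ∨ a ≠ 0 := by rcases hab with h | h <;> simp [h]
  rcases hyz_rank.lt_or_gt with hlt | hgt
  · -- `M` is defined at the stage of `y`, so `y` is a curve predecessor of `z`
    obtain ⟨hy₀, hy₁⟩ := 𝓕.isPtOver_of_rank_le le_rfl (p := y)
    have hMz : 𝓕.specialCurve z = M := 𝓕.specialCurve_eq ⟨𝓕.rank y, hlt,
      .inl ⟨_, neg_mem (𝓕.monotone hj.le hb), _, 𝓕.monotone hj.le ha, _,
        add_mem (mul_mem (neg_mem (𝓕.monotone hj.le hb)) hy₀) (mul_mem (𝓕.monotone hj.le ha) hy₁),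
        hn', rfl⟩⟩ hzM
    have hMy : ¬ 𝓕.IsCurveBelow (𝓕.rank y) M := fun h =>
      hMC (𝓕.eq_of_isCurveBelow_rank h ⟨j, hj, hCj⟩ hyM hyC)
    exact hc z y (.inl ⟨hMz ▸ hyM, hindex_yz, hlt, hMz ▸ hMy⟩) hcyz
  · -- `M` is defined before the stage of `y`, so `y` lies on two distinct early curves
    obtain ⟨hz₀, hz₁⟩ := 𝓕.isPtOver_of_rank_le (le_max_right j (𝓕.rank z))
    have ha' := 𝓕.monotone (le_max_left j (𝓕.rank z)) ha
    have hb' := 𝓕.monotone (le_max_left j (𝓕.rank z)) hb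
    have hM : IsCurveOver (𝓕.field (max j (𝓕.rank z))) M := by
      refine .inl ⟨_, neg_mem hb', _, ha', _, ?_, hn', rfl⟩
      rw [← mem_lineSet.mp hzM]
      exact add_mem (mul_mem (neg_mem hb') hz₀) (mul_mem ha' hz₁)
    exact hMC (𝓕.eq_of_isCurveBelow_rank ⟨_, max_lt hj hgt, hM⟩ ⟨j, hj, hCj⟩ hyM hyC)

end SqrtFieldChain

theorem SqrtFieldChain.exists_coloring {ι : Type*} [LinearOrder ι] [WellFoundedLT ι]
    (𝓕 : SqrtFieldChain ι) :
    ∃ f : Pt → ℕ, ∀ x y z : Pt, x ≠ y → z ≠ y → inner ℝ (x - y) (z - y) = 0 →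
      ¬ (f x = f y ∧ f y = f z) := by
  obtain ⟨c, hc⟩ := 𝓕.exists_coloring_avoiding_conflicts
  refine ⟨fun p => Nat.pair (𝓕.index p) (c p), fun x y z hxy hzy hright hsame => ?_⟩
  simp only [Nat.pair_eq_pair] at hsame
  obtain ⟨⟨hixy, hcxy⟩, hiyz, hcyz⟩ := hsame
  rw [Pt.inner_eq] at hright
  simp only [PiLp.sub_apply] at hright
  have hxz : x ≠ z := by
    rintro rfl
    nlinarith [Pt.sq_add_sq_pos_of_ne hzy]
  have rank_ne {p q : Pt} (hpq : p ≠ q) (hi : 𝓕.index p = 𝓕.index q) : 𝓕.rank p ≠ 𝓕.rank q :=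
    fun hr => hpq (𝓕.eq_of_rank_eq_of_index_eq hr hi)
  wlog hxz_rank : 𝓕.rank x < 𝓕.rank z generalizing x z
  · exact this z x hzy hxy (by linear_combination hright) hiyz.symm hcyz.symm hixy.symm
      hcxy.symm hxz.symm ((rank_ne hxz (hixy.trans hiyz)).symm.lt_of_le (not_lt.mp hxz_rank))
  rcases (rank_ne hzy.symm hiyz).lt_or_gt with hyz_rank | hzy_rank
  · exact 𝓕.false_of_leg_rank_max hc hxy.symm (by linear_combination hright) hyz_rank hxz_rank
      (rank_ne hxy.symm hixy.symm) hiyz hixy.symm hcyz hcxy.symm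
  · exact 𝓕.false_of_vertex_rank_max hc hxz hright hxz_rank hzy_rank hiyz.symm
      (hcxy.trans hcyz) hcyz.symm

theorem stmt0 (hCH : CH) :
    ∃ f : Pt → ℕ, ∀ x y z : Pt, ¬ Collinear ℝ ({x, y, z} : Set Pt) →
      ∠ x y z = Real.pi / 2 → ¬ (f x = f y ∧ f y = f z) := by
  obtain ⟨𝓕⟩ := nonempty_sqrtFieldChain_of_CH hCH
  obtain ⟨f, hf⟩ := 𝓕.exists_coloring
  refine ⟨f, fun x y z hcol hangle => hf x y z ?_ ?_ ?_⟩
  · rintro rfl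
    exact hcol (by simpa using collinear_pair ℝ x z)
  · rintro rfl
    exact hcol (by simpa using collinear_pair ℝ x z)
  · exact InnerProductGeometry.inner_eq_zero_iff_angle_eq_pi_div_two _ _ |>.mpr hangle
end
end

section
/- Let f : ℝ² → ℕ be a coloring and φ a function assigning to each line and each circle an infinite set of natural numbers, such that: (a) for every circle C, every color i ∈ φ(C), and points x, y ∈ C with f(x) = f(y) = i, the points x, y are not antipodal on C; and (b) for every circle C and color i ∉ φ(C), at most 2 points of C have color i. Then f admits no monochromatic right triangle. -/
/-!
By Thales' theorem the right-angle vertex `y` of a right triangle `x y z` lies on the circle with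
diameter `xz`, on which `x` and `z` are antipodal. If the common colour of the triangle belongs to
`φ` of that circle, (a) forbids the antipodal pair `x, z`; otherwise (b) forbids the three points.
-/

open EuclideanGeometry Metric Real Set

noncomputable section

theorem Set.three_le_encard_of_mem {α : Type*} {s : Set α} {x y z : α}
    (hx : x ∈ s) (hy : y ∈ s) (hz : z ∈ s) (hxy : x ≠ y) (hxz : x ≠ z) (hyz : y ≠ z) :
    3 ≤ s.encard := by
  have htriple : ({x, y, z} : Set α).encard = 3 :=
    Set.encard_eq_three.2 ⟨x, y, z, hxy, hxz, hyz, rfl⟩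
  rw [← htriple]
  exact Set.encard_le_encard
    (Set.insert_subset hx (Set.insert_subset hy (Set.singleton_subset_iff.2 hz)))

theorem stmt10_general (f : Pt → ℕ) (φ : Set Pt → Set ℕ)
    (ha : ∀ (o : Pt) (r : ℝ), 0 < r → ∀ i ∈ φ (sphere o r),
      ∀ x ∈ sphere o r, ∀ y ∈ sphere o r, f x = i → f y = i → midpoint ℝ x y ≠ o)
    (hb : ∀ (o : Pt) (r : ℝ), 0 < r → ∀ i ∉ φ (sphere o r),
      {p ∈ (sphere o r : Set Pt) | f p = i}.encard ≤ 2) :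
    ∀ x y z : Pt, ¬ Collinear ℝ ({x, y, z} : Set Pt) → ∠ x y z = Real.pi / 2 →
      ¬ (f x = f y ∧ f y = f z) := by
  rintro x y z hcol hangle ⟨hxy, hyz⟩
  set s := Sphere.ofDiameter x z
  have hdiam : s.IsDiameter x z := Sphere.isDiameter_ofDiameter x z
  have hy : y ∈ s := Sphere.angle_eq_pi_div_two_iff_mem_sphere_ofDiameter.1 hangle
  have hr : 0 < s.radius := hdiam.left_ne_right_iff_radius_pos.1 (ne₁₃_of_not_collinear hcol)
  by_cases hcolour : f y ∈ φ (sphere s.center s.radius)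
  · exact ha _ _ hr _ hcolour x hdiam.left_mem z hdiam.right_mem hxy hyz.symm
      hdiam.midpoint_eq_center
  · have hthree := Set.three_le_encard_of_mem (s := {p ∈ sphere s.center s.radius | f p = f y})
      ⟨hdiam.left_mem, hxy⟩ ⟨hy, rfl⟩ ⟨hdiam.right_mem, hyz.symm⟩
      (ne₁₂_of_not_collinear hcol) (ne₁₃_of_not_collinear hcol) (ne₂₃_of_not_collinear hcol)
    exact absurd (hthree.trans (hb _ _ hr _ hcolour)) (by decide)

theorem stmt10 (f : Pt → ℕ) (φ : Set Pt → Set ℕ)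
    (hinf : ∀ e : Set Pt, IsLine e ∨ IsCircle e → (φ e).Infinite)
    (ha : ∀ (o : Pt) (r : ℝ), 0 < r → ∀ i ∈ φ (sphere o r),
      ∀ x ∈ sphere o r, ∀ y ∈ sphere o r, f x = i → f y = i → midpoint ℝ x y ≠ o)
    (hb : ∀ (o : Pt) (r : ℝ), 0 < r → ∀ i ∉ φ (sphere o r),
      {p ∈ (sphere o r : Set Pt) | f p = i}.encard ≤ 2) :
    ∀ x y z : Pt, ¬ Collinear ℝ ({x, y, z} : Set Pt) → ∠ x y z = Real.pi / 2 →
      ¬ (f x = f y ∧ f y = f z) :=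
  stmt10_general f φ ha hb
end
end
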